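/- Let p be a prime and e ≥ 1. Then every monic divisor g ∈ ℤ[x] of x^{p^e} - 1 has all its coefficients in {-1, 0, 1}. -/
import Mathlib


open Polynomial

private lemma coeff_X_pow_sub_one_mem (n k : ℕ) :
    ((X : ℤ[X]) ^ n - 1).coeff k ∈ ({-1, 0, 1} : Set ℤ) := by
  simp only [coeff_sub, coeff_X_pow, coeff_one, Set.mem_insert_iff, Set.mem_singleton_iff]
  split_ifs <;> norm_num

private lemma monic_dvd_eq {A g : ℤ[X]} (hA : A.Monic) (hg : g.Monic) (hdvd : g ∣ A)
    (hdeg : A.natDegree ≤ g.natDegree) : g = A := by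
  obtain ⟨c, hc⟩ := hdvd
  have hc0 : c ≠ 0 := by rintro rfl; rw [mul_zero] at hc; exact hA.ne_zero hc
  have hcm : c.Monic := hg.of_mul_monic_left (hc ▸ hA)
  have hdc : c.natDegree = 0 := by
    have h2 := natDegree_mul hg.ne_zero hc0
    rw [← hc] at h2; omega
  have : c = 1 := hcm.natDegree_eq_zero.mp hdc
  rw [hc, this, mul_one]

private lemma aux17 (p : ℕ) (hp : p.Prime) :
    ∀ e : ℕ, ∀ g : ℤ[X], g.Monic → g ∣ X ^ (p ^ e) - 1 →
      ∀ k, g.coeff k ∈ ({-1, 0, 1} : Set ℤ) := by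
  intro e
  induction e with
  | zero =>
    intro g hg hdvd k
    rw [pow_zero, pow_one] at hdvd
    have hX : ((X : ℤ[X]) - 1).Monic := by simpa using monic_X_sub_C (1 : ℤ)
    have hXd : ((X : ℤ[X]) - 1).natDegree = 1 := by
      simpa using natDegree_X_sub_C (1 : ℤ)
    have hd : g.natDegree ≤ 1 := hXd ▸ natDegree_le_of_dvd hdvd hX.ne_zero
    interval_cases hdg : g.natDegree
    · have : g = 1 := hg.natDegree_eq_zero.mp hdg
      subst this
      simp only [coeff_one, Set.mem_insert_iff, Set.mem_singleton_iff]
      split_ifs <;> norm_num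
    · have hge : g = X - 1 := by
        apply monic_dvd_eq hX hg hdvd
        rw [hXd, hdg]
      subst hge
      simpa using coeff_X_pow_sub_one_mem 1 k
  | succ e ih =>
    intro g hg hdvd k
    set A : ℤ[X] := X ^ (p ^ e) - 1 with hAdef
    set B : ℤ[X] := ∑ i ∈ Finset.range p, (X ^ (p ^ e)) ^ i with hBdef
    have hBcyc : B = cyclotomic (p ^ (e + 1)) ℤ := (cyclotomic_prime_pow_eq_geom_sum hp).symm
    have hBmonic : B.Monic := by rw [hBcyc]; exact cyclotomic.monic _ ℤ
    have hBprime : Prime B := by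
      rw [hBcyc]; exact (cyclotomic.irreducible (pow_pos hp.pos _)).prime
    have hAmonic : A.Monic := by
      simpa [hAdef] using monic_X_pow_sub_C (1 : ℤ) (n := p ^ e) (pow_ne_zero _ hp.ne_zero)
    have hfac : (X : ℤ[X]) ^ (p ^ (e + 1)) - 1 = A * B := by
      have h1 := geom_sum_mul ((X : ℤ[X]) ^ (p ^ e)) p
      rw [← pow_mul, ← pow_succ] at h1
      rw [← h1, mul_comm]
    rw [hfac] at hdvd
    by_cases hBg : B ∣ g
    · obtain ⟨h, rfl⟩ := hBg
      have hhmonic : h.Monic := hBmonic.of_mul_monic_left hg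
      have hhA : h ∣ A := by
        have hB0 : B ≠ 0 := hBmonic.ne_zero
        rw [mul_comm] at hdvd
        exact (mul_dvd_mul_iff_right hB0).mp hdvd
      have hAdim : A.natDegree = p ^ e := by
        simpa [hAdef] using natDegree_X_pow_sub_C (n := p ^ e) (r := (1 : ℤ))
      have hhd : h.natDegree ≤ p ^ e := hAdim ▸ natDegree_le_of_dvd hhA hAmonic.ne_zero
      rcases lt_or_eq_of_le hhd with hhd | hhd
      · -- coeff of B * h via the sum
        have hcoeff : (B * h).coeff k =
            ∑ i ∈ Finset.range p, if p ^ e * i ≤ k then h.coeff (k - p ^ e * i) else 0 := by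
          rw [hBdef, Finset.sum_mul]
          rw [finset_sum_coeff]
          refine Finset.sum_congr rfl fun i _ => ?_
          rw [← pow_mul, mul_comm ((X : ℤ[X]) ^ (p ^ e * i)) h, coeff_mul_X_pow']
        rw [hcoeff]
        have key : ∀ i : ℕ, i ≠ k / p ^ e →
            (if p ^ e * i ≤ k then h.coeff (k - p ^ e * i) else 0) = 0 := by
          intro i hi
          split_ifs with hle
          · by_contra hne
            have h1 : k - p ^ e * i ≤ h.natDegree := le_natDegree_of_ne_zero hne
            have h2 : k < p ^ e * i + p ^ e := by omega
            have e1 : i * p ^ e = p ^ e * i := by ring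
            have e2 : (i + 1) * p ^ e = p ^ e * i + p ^ e := by ring
            have : k / p ^ e = i := Nat.div_eq_of_lt_le (by omega) (by omega)
            exact hi this.symm
          · rfl
        by_cases hi0 : k / p ^ e < p
        · rw [Finset.sum_eq_single_of_mem (k / p ^ e) (Finset.mem_range.mpr hi0)
            (fun b _ hb => key b hb)]
          split_ifs with hle
          · exact ih h hhmonic hhA _
          · exact Or.inr (Or.inl rfl)
        · rw [Finset.sum_eq_zero (fun i hi => key i (by
            intro hcon; rw [hcon] at hi; exact hi0 (Finset.mem_range.mp hi)))]
          exact Or.inr (Or.inl rfl)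
      · have : h = A := monic_dvd_eq hAmonic hhmonic hhA (le_of_eq (hAdim.trans hhd.symm))
        rw [this, mul_comm, ← hfac]
        exact coeff_X_pow_sub_one_mem _ k
    · have hrel : IsRelPrime g B := by
        intro d hdg hdB
        obtain ⟨c, hc⟩ := hdB
        rcases hBprime.irreducible.isUnit_or_isUnit hc with hu | hu
        · exact hu
        · exfalso
          apply hBg
          obtain ⟨v, hv⟩ := hu.exists_right_inv
          have : d = B * v := by
            calc d = d * (c * v) := by rw [hv, mul_one]
            _ = (d * c) * v := by ring
            _ = B * v := by rw [← hc]
          exact dvd_trans ⟨v, this⟩ hdg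
      exact ih g hg (hrel.dvd_of_dvd_mul_right hdvd) k

theorem stmt_17 (p : ℕ) (hp : p.Prime) (e : ℕ) (he : 1 ≤ e)
    (g : Polynomial ℤ) (hg : g.Monic) (hdvd : g ∣ X ^ (p ^ e) - 1) (k : ℕ) :
    g.coeff k ∈ ({-1, 0, 1} : Set ℤ) := by
  exact aux17 p hp e g hg hdvd k
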